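/- arXiv:1706.04030 — 7 statements merged into one kernel-verified Lean document; each statement's English description precedes it below -/
import Mathlib

section
/- Let p, q be positive integers with q < p, r = p/q, and 0 < c < 1 real. Then the polynomial W(z) = c·z^p − r·z^q + (r−1) has exactly two real positive roots z₀ and z₁ satisfying 0 < z₀ < 1 < z₁, and moreover z₀·z₁ > 1. -/
/-!
Put `a = p - q`. Since `W'(z) = p z^(q-1) (c z^a - 1)`, `W` decreases on `[0, m]` and increases on
`[m, ∞)`, where `c m^a = 1` and `m > 1`. As `W 0 > 0 > W 1` and `W → ∞`, there is exactly one
positive root on each side of `m`.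

For `z₀ z₁ > 1` it suffices that `W (1/z₀) < 0`. Eliminating `c` by means of `W z₀ = 0` and writing
`z₀ = e^(-u)` gives `q W (1/z₀) = 2 e^(pu) (p sinh (a u) - a sinh (p u))`, which is negative because
`sinh x / x` is strictly increasing on `(0, ∞)`, by strict convexity of `sinh` there.
-/

open Set Filter Real

lemma strictConvexOn_sinh : StrictConvexOn ℝ (Ici 0) sinh :=
  strictConvexOn_of_deriv2_pos (convex_Ici 0) continuous_sinh.continuousOn fun x hx => by
    rw [interior_Ici] at hx
    simpa [Real.deriv_sinh, Real.deriv_cosh] using sinh_pos_iff.2 hx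

lemma mul_sinh_mul_lt_mul_sinh_mul {a b u : ℝ} (ha : 0 < a) (hab : a < b) (hu : 0 < u) :
    b * sinh (a * u) < a * sinh (b * u) := by
  have h := strictConvexOn_sinh.secant_strict_mono_aux1 (x := 0) (y := a * u) (z := b * u)
    self_mem_Ici (mul_nonneg (ha.trans hab).le hu.le) (by positivity)
    (mul_lt_mul_of_pos_right hab hu)
  simp only [sub_zero, sinh_zero, mul_zero, zero_add] at h
  nlinarith

lemma mul_pow_sub_inv_lt {y : ℝ} (hy : 1 < y) {a b : ℕ} (ha : 0 < a) (hab : a < b) :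
    b * (y ^ a - (y ^ a)⁻¹) < a * (y ^ b - (y ^ b)⁻¹) := by
  have hsinh (n : ℕ) : sinh (n * log y) = (y ^ n - (y ^ n)⁻¹) / 2 := by
    rw [sinh_eq, exp_neg, exp_nat_mul, exp_log (by linarith)]
  have h := mul_sinh_mul_lt_mul_sinh_mul (a := a) (b := b) (u := log y) (by exact_mod_cast ha)
    (by exact_mod_cast hab) (log_pos hy)
  rw [hsinh, hsinh] at h
  linarith

noncomputable def W (p q : ℕ) (c z : ℝ) : ℝ :=
  c * z ^ p - ((p : ℝ) / q) * z ^ q + ((p : ℝ) / q - 1)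

section
variable {p q : ℕ} {c : ℝ}

lemma W_zero (hq : 0 < q) (hpq : q < p) : 0 < W p q c 0 := by
  have hq' : (0 : ℝ) < q := by exact_mod_cast hq
  simp [W, zero_pow hq.ne', zero_pow (hq.trans hpq).ne', one_lt_div hq', hpq]

lemma W_one : W p q c 1 = c - 1 := by simp [W]

lemma continuous_W : Continuous (W p q c) := by unfold W; fun_prop

lemma hasDerivAt_W (hq : 0 < q) (hpq : q ≤ p) (z : ℝ) :
    HasDerivAt (W p q c) (p * z ^ (q - 1) * (c * z ^ (p - q) - 1)) z := by
  have hq' : (q : ℝ) ≠ 0 := by exact_mod_cast hq.ne'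
  have h := (((hasDerivAt_pow p z).const_mul c).sub
    ((hasDerivAt_pow q z).const_mul ((p : ℝ) / q))).add_const ((p : ℝ) / q - 1)
  refine h.congr_deriv ?_
  rw [show p - 1 = (q - 1) + (p - q) by omega, pow_add]
  field_simp

lemma W_strictAntiOn (hq : 0 < q) (hpq : q < p) (hc : 0 < c) {m : ℝ} (hm : c * m ^ (p - q) = 1) :
    StrictAntiOn (W p q c) (Icc 0 m) := by
  refine strictAntiOn_of_deriv_neg (convex_Icc 0 m) continuous_W.continuousOn fun x hx => ?_
  rw [interior_Icc] at hx
  rw [(hasDerivAt_W hq hpq.le x).deriv]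
  have hp : (0 : ℝ) < p := by exact_mod_cast hq.trans hpq
  have hlt : c * x ^ (p - q) < 1 := hm ▸ mul_lt_mul_of_pos_left
    (pow_lt_pow_left₀ hx.2 hx.1.le (Nat.sub_pos_of_lt hpq).ne') hc
  exact mul_neg_of_pos_of_neg (mul_pos hp (pow_pos hx.1 _)) (by linarith)

lemma W_strictMonoOn (hq : 0 < q) (hpq : q < p) (hc : 0 < c) {m : ℝ} (hm0 : 0 ≤ m)
    (hm : c * m ^ (p - q) = 1) : StrictMonoOn (W p q c) (Ici m) := by
  refine strictMonoOn_of_deriv_pos (convex_Ici m) continuous_W.continuousOn fun x hx => ?_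
  rw [interior_Ici] at hx
  rw [(hasDerivAt_W hq hpq.le x).deriv]
  have hp : (0 : ℝ) < p := by exact_mod_cast hq.trans hpq
  have hgt : 1 < c * x ^ (p - q) := hm ▸ mul_lt_mul_of_pos_left
    (pow_lt_pow_left₀ hx hm0 (Nat.sub_pos_of_lt hpq).ne') hc
  exact mul_pos (mul_pos hp (pow_pos (hm0.trans_lt hx) _)) (by linarith)

lemma tendsto_W_atTop (hq : 0 < q) (hpq : q < p) (hc : 0 < c) :
    Tendsto (W p q c) atTop atTop := by
  have h : Tendsto (fun z : ℝ => z ^ q * (c * z ^ (p - q) - p / q)) atTop atTop :=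
    (tendsto_pow_atTop hq.ne').atTop_mul_atTop₀ (tendsto_atTop_add_const_right _ _
      ((tendsto_pow_atTop (Nat.sub_pos_of_lt hpq).ne').const_mul_atTop hc))
  refine (tendsto_atTop_add_const_right _ ((p : ℝ) / q - 1) h).congr fun z => ?_
  rw [W, mul_sub, ← mul_assoc, mul_comm (z ^ q) c, mul_assoc, ← pow_add,
    Nat.add_sub_cancel' hpq.le]
  ring

lemma W_neg_of_W_inv_eq_zero (hq : 0 < q) (hpq : q < p) {y : ℝ} (hy : 1 < y)
    (h : W p q c y⁻¹ = 0) : W p q c y < 0 := by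
  have hkey := mul_pow_sub_inv_lt hy (Nat.sub_pos_of_lt hpq) (Nat.sub_lt (hq.trans hpq) hq)
  have hy0 : 0 < y := one_pos.trans hy
  have hq' : (0 : ℝ) < q := by exact_mod_cast hq
  have hp : y ^ p = y ^ q * y ^ (p - q) := by rw [← pow_add, Nat.add_sub_cancel' hpq.le]
  -- `q W y` and `q y^(2p) W y⁻¹` have the same `c`-term, `q c y^p`.
  have hident : q * W p q c y = y ^ p * (p * (y ^ (p - q) - (y ^ (p - q))⁻¹)
      - ↑(p - q) * (y ^ p - (y ^ p)⁻¹)) + q * (y ^ p) ^ 2 * W p q c y⁻¹ := by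
    simp only [W, inv_pow, hp]
    rw [Nat.cast_sub hpq.le]
    field_simp
    ring
  have : q * W p q c y < 0 := by
    rw [hident, h, mul_zero, add_zero]
    exact mul_neg_of_pos_of_neg (by positivity) (by linarith)
  exact neg_of_mul_neg_right this hq'.le

end

lemma exists_one_lt_mul_pow_eq_one {n : ℕ} (hn : n ≠ 0) {c : ℝ} (hc0 : 0 < c) (hc1 : c < 1) :
    ∃ m : ℝ, 1 < m ∧ c * m ^ n = 1 := by
  have hm : (c⁻¹ ^ (n⁻¹ : ℝ)) ^ n = c⁻¹ := rpow_inv_natCast_pow (inv_nonneg.2 hc0.le) hn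
  refine ⟨c⁻¹ ^ (n⁻¹ : ℝ), ?_, by rw [hm, mul_inv_cancel₀ hc0.ne']⟩
  rw [← one_lt_pow_iff_of_nonneg (by positivity) hn, hm]
  exact one_lt_inv₀ hc0 |>.2 hc1

/-- For `0 < c < 1` real, `W(z) = c·z^p − r·z^q + (r−1)` (with `r = p/q > 1`)
has exactly two positive real roots `z₀, z₁` with `0 < z₀ < 1 < z₁` and `z₀·z₁ > 1`. -/
theorem two_positive_roots (p q : ℕ) (hq : 0 < q) (hpq : q < p) (c : ℝ)
    (hc0 : 0 < c) (hc1 : c < 1) :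
    ∃ z₀ z₁ : ℝ, 0 < z₀ ∧ z₀ < 1 ∧ 1 < z₁ ∧
      c * z₀ ^ p - ((p : ℝ) / q) * z₀ ^ q + ((p : ℝ) / q - 1) = 0 ∧
      c * z₁ ^ p - ((p : ℝ) / q) * z₁ ^ q + ((p : ℝ) / q - 1) = 0 ∧
      1 < z₀ * z₁ ∧
      ∀ z : ℝ, 0 < z →
        c * z ^ p - ((p : ℝ) / q) * z ^ q + ((p : ℝ) / q - 1) = 0 → z = z₀ ∨ z = z₁ := by
  obtain ⟨m, hm1, hcm⟩ := exists_one_lt_mul_pow_eq_one (Nat.sub_pos_of_lt hpq).ne' hc0 hc1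
  have hanti := W_strictAntiOn hq hpq hc0 hcm
  have hmono := W_strictMonoOn hq hpq hc0 (zero_le_one.trans hm1.le) hcm
  have hWm : W p q c m < 0 := by
    have := hanti ⟨zero_le_one, hm1.le⟩ ⟨zero_le_one.trans hm1.le, le_rfl⟩ hm1
    rw [W_one] at this
    linarith
  obtain ⟨z₀, ⟨hz₀0, hz₀1⟩, hz₀⟩ :=
    intermediate_value_Ioo' zero_le_one (continuous_W (c := c)).continuousOn
      ⟨W_one.trans_lt (by linarith), W_zero hq hpq⟩
  obtain ⟨M, hM, hmM⟩ :=
    ((tendsto_W_atTop hq hpq hc0).eventually_gt_atTop 0).and (eventually_gt_atTop m) |>.exists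
  obtain ⟨z₁, ⟨hmz₁, -⟩, hz₁⟩ :=
    intermediate_value_Ioo hmM.le continuous_W.continuousOn ⟨hWm, hM⟩
  refine ⟨z₀, z₁, hz₀0, hz₀1, hm1.trans hmz₁, hz₀, hz₁, ?_, fun z hz hWz => ?_⟩
  · have hW_inv : W p q c z₀⁻¹ < 0 :=
      W_neg_of_W_inv_eq_zero hq hpq ((one_lt_inv₀ hz₀0).2 hz₀1) (by rwa [inv_inv])
    have hinv_lt : z₀⁻¹ < z₁ := by
      by_contra! h
      exact (hmono.monotoneOn hmz₁.le (hmz₁.le.trans h) h).not_gt (hz₁ ▸ hW_inv)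
    rwa [inv_lt_iff_one_lt_mul₀' hz₀0] at hinv_lt
  · rcases le_or_gt z m with h | h
    · exact .inl <|
        hanti.injOn ⟨hz.le, h⟩ ⟨hz₀0.le, hz₀1.le.trans hm1.le⟩ (hWz.trans hz₀.symm)
    · exact .inr <| hmono.injOn h.le hmz₁.le (hWz.trans hz₁.symm)
end

section
/- Let p > m be positive integers and z₀ a positive real number with z₀ ≠ 1. Then (z₀^{−p} − z₀^{p}) / (z₀^{−m} − z₀^{m}) > p/m. -/
/-!
Writing `z₀ = exp u` with `u ≠ 0`, the ratio is `sinh (p u) / sinh (m u)`, which is even in `u`.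
For `u > 0` the claim says `sinh (m u) / (m u) < sinh (p u) / (p u)`: secant slopes of the
strictly convex function `sinh` on `[0, ∞)`, taken from the origin, increase.
-/

open Real Set

namespace Real

lemma strictConvexOn_sinh : StrictConvexOn ℝ (Ici 0) sinh := by
  refine strictConvexOn_of_deriv2_pos (convex_Ici 0) continuous_sinh.continuousOn fun x hx ↦ ?_
  rw [interior_Ici] at hx
  have hderiv2 : deriv^[2] sinh = sinh := by
    simp only [Function.iterate_succ, Function.iterate_zero, Function.comp_apply, id_eq,
      deriv_sinh, deriv_cosh]
  rw [hderiv2]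
  exact sinh_pos_iff.2 hx

lemma strictMonoOn_sinh_div_self : StrictMonoOn (fun x ↦ sinh x / x) (Ioi 0) := by
  intro x hx y hy hxy
  simpa using strictConvexOn_sinh.secant_strict_mono (mem_Ici.2 le_rfl) (Ioi_subset_Ici_self hx)
    (Ioi_subset_Ici_self hy) (ne_of_gt hx) (ne_of_gt hy) hxy

lemma div_lt_sinh_mul_div_sinh_mul {a b u : ℝ} (ha : 0 < a) (hab : a < b) (hu : u ≠ 0) :
    b / a < sinh (b * u) / sinh (a * u) := by
  wlog hu_pos : 0 < u generalizing u
  · have h := this (neg_ne_zero.2 hu) (neg_pos.2 (hu.lt_or_gt.resolve_right hu_pos))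
    rwa [mul_neg, mul_neg, sinh_neg, sinh_neg, neg_div_neg_eq] at h
  have hau : 0 < a * u := mul_pos ha hu_pos
  have hbu : 0 < b * u := mul_pos (ha.trans hab) hu_pos
  have hslope := strictMonoOn_sinh_div_self hau hbu (mul_lt_mul_of_pos_right hab hu_pos)
  have hsinh : 0 < sinh (a * u) := sinh_pos_iff.2 hau
  rw [div_lt_div_iff₀ hau hbu] at hslope
  rw [div_lt_div_iff₀ ha hsinh]
  nlinarith

lemma zpow_neg_sub_zpow {x : ℝ} (hx : 0 < x) (n : ℤ) :
    x ^ (-n) - x ^ n = -2 * sinh (n * log x) := by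
  rw [sinh_eq, ← rpow_intCast, ← rpow_intCast, rpow_def_of_pos hx, rpow_def_of_pos hx]
  push_cast
  ring_nf

end Real

/-- For positive integers `p > m` and `z₀ > 0`, `z₀ ≠ 1`,
`(z₀^{−p} − z₀^{p}) / (z₀^{−m} − z₀^{m}) > p/m`. -/
theorem ratio_gt (p m : ℕ) (hm : 0 < m) (hpm : m < p) (z₀ : ℝ) (hz : 0 < z₀) (hz1 : z₀ ≠ 1) :
    (z₀ ^ (-(p : ℤ)) - z₀ ^ (p : ℤ)) / (z₀ ^ (-(m : ℤ)) - z₀ ^ (m : ℤ)) > (p : ℝ) / m := by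
  rw [zpow_neg_sub_zpow hz, zpow_neg_sub_zpow hz, mul_div_mul_left _ _ (by norm_num)]
  push_cast
  exact div_lt_sinh_mul_div_sinh_mul (Nat.cast_pos.2 hm) (Nat.cast_lt.2 hpm)
    (log_ne_zero_of_pos_of_ne_one hz hz1)
end

section
/- Let p, q be positive integers with q < p, r = p/q, and c ∈ ℂ∖{0}. If the polynomial R(ζ) = c·ζ^p − r·ζ^q + (r−1) has a root ζ with |ζ^q| such that ζ^q is real and ζ^q = μ > 1, then R has another root ξ with ξ^q real, 0 < ξ^q < 1, and ζ^q · ξ^q > 1. -/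
/-!
Write `ζ = t * ω` with `t = μ ^ (1/q) > 1` and `ω ^ q = 1`. On the ray `ℝ * ω` the trinomial is
`x ^ p * (c * ω ^ p - φ x)` with `φ x = (r * x ^ q - r + 1) / x ^ p` (`coeffOfRoot`), so the root
`ζ` forces `c * ω ^ p = φ t`. Bernoulli's inequality gives `φ t < φ 1 = 1`, and a derivative
computation gives `φ t⁻¹ < φ t`; the intermediate value theorem then yields `x ∈ (t⁻¹, 1)` with
`φ x = φ t`, and `ξ = x * ω` is the companion root, with `μ * x ^ q = (t * x) ^ q > 1`.
-/

open Set

theorem natCast_mul_pow_lt {m n : ℕ} (hn : 0 < n) (hnm : n < m) {t : ℝ} (ht : 1 < t) :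
    (m : ℝ) * t ^ n < n * t ^ m + (m - n) := by
  have hn' : (0 : ℝ) < n := by exact_mod_cast hn
  have hs : 0 < t ^ n - 1 := sub_pos.2 (one_lt_pow₀ ht hn.ne')
  have hmn : 1 < (m : ℝ) / n := by rw [one_lt_div hn']; exact_mod_cast hnm
  have hbern := one_add_mul_self_lt_rpow_one_add (by linarith) hs.ne' hmn
  rw [add_sub_cancel, ← Real.rpow_natCast_mul (by positivity), mul_div_cancel₀ _ hn'.ne',
    Real.rpow_natCast] at hbern
  have hscaled := mul_lt_mul_of_pos_left hbern hn'
  rw [mul_add, mul_one, ← mul_assoc, mul_div_cancel₀ _ hn'.ne'] at hscaled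
  linarith

theorem mul_pow_add_lt {q d : ℕ} (hq : 0 < q) (hd : 0 < d) {t : ℝ} (ht : 1 < t) :
    ((q : ℝ) + d) * t ^ (q + 2 * d) + d < d * t ^ (2 * q + 2 * d) + (q + d) * t ^ q := by
  let f : ℝ → ℝ := fun x =>
    d * x ^ (2 * q + 2 * d) - (q + d) * x ^ (q + 2 * d) + (q + d) * x ^ q - d
  have hf' (x : ℝ) : HasDerivAt f ((q + d) * x ^ (q - 1) *
      (2 * d * x ^ (q + 2 * d) - (q + 2 * d) * x ^ (2 * d) + q)) x := by
    refine ((((hasDerivAt_pow (2 * q + 2 * d) x).const_mul (d : ℝ)).sub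
      ((hasDerivAt_pow (q + 2 * d) x).const_mul ((q : ℝ) + d))).add
      ((hasDerivAt_pow q x).const_mul ((q : ℝ) + d))).sub_const (d : ℝ) |>.congr_deriv ?_
    rw [show 2 * q + 2 * d - 1 = (q - 1) + (q + 2 * d) by omega,
      show q + 2 * d - 1 = (q - 1) + 2 * d by omega, pow_add, pow_add]
    push_cast
    ring
  have hmono : StrictMonoOn f (Ici 1) := by
    refine strictMonoOn_of_hasDerivWithinAt_pos (convex_Ici 1) (by fun_prop)
      (fun x _ => (hf' x).hasDerivWithinAt) fun x hx => ?_
    rw [interior_Ici] at hx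
    have hgap := natCast_mul_pow_lt (m := q + 2 * d) (n := 2 * d) (by omega) (by omega) hx
    push_cast at hgap
    have hx_pow : 0 < x ^ (q - 1) := pow_pos (zero_lt_one.trans hx) _
    have hqd : (0 : ℝ) < q + d := by positivity
    apply mul_pos (mul_pos hqd hx_pow)
    linarith
  have hf := hmono self_mem_Ici ht.le ht
  simp only [f, one_pow] at hf
  linarith

noncomputable def coeffOfRoot (p q : ℕ) (x : ℝ) : ℝ :=
  ((p : ℝ) / q * x ^ q - ((p : ℝ) / q - 1)) / x ^ p

noncomputable def trinomialR (p q : ℕ) (c z : ℂ) : ℂ :=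
  c * z ^ p - ((p : ℂ) / q) * z ^ q + ((p : ℂ) / q - 1)

section coeffOfRoot

variable {p q : ℕ} {t : ℝ}

theorem coeffOfRoot_one : coeffOfRoot p q 1 = 1 := by
  simp [coeffOfRoot]

theorem coeffOfRoot_lt_one (hq : 0 < q) (hqp : q < p) (ht : 1 < t) : coeffOfRoot p q t < 1 := by
  have hq' : (0 : ℝ) < q := by exact_mod_cast hq
  have hgap := natCast_mul_pow_lt hq hqp ht
  rw [coeffOfRoot, div_lt_one (by positivity), ← sub_pos]
  have : t ^ p - ((p : ℝ) / q * t ^ q - ((p : ℝ) / q - 1)) = (q * t ^ p + (p - q) - p * t ^ q) / q := by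
    field_simp
    ring
  rw [this]
  exact div_pos (by linarith) hq'

theorem coeffOfRoot_inv_lt (hq : 0 < q) (hqp : q < p) (ht : 1 < t) :
    coeffOfRoot p q t⁻¹ < coeffOfRoot p q t := by
  obtain ⟨d, hd, rfl⟩ : ∃ d, 0 < d ∧ p = q + d := ⟨p - q, by omega, by omega⟩
  have ht0 : 0 < t := zero_lt_one.trans ht
  have hgap := mul_pow_add_lt hq hd ht
  rw [← sub_pos]
  have : coeffOfRoot (q + d) q t - coeffOfRoot (q + d) q t⁻¹ =
      (d * t ^ (2 * q + 2 * d) + (q + d) * t ^ q - ((q + d) * t ^ (q + 2 * d) + d)) /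
        (q * t ^ (q + d)) := by
    simp only [coeffOfRoot, inv_pow]
    field_simp
    push_cast
    ring
  rw [this]
  exact div_pos (by linarith) (by positivity)

theorem exists_coeffOfRoot_eq (hq : 0 < q) (hqp : q < p) (ht : 1 < t) :
    ∃ x ∈ Ioo t⁻¹ 1, coeffOfRoot p q x = coeffOfRoot p q t := by
  have hcont : ContinuousOn (coeffOfRoot p q) (Icc t⁻¹ 1) :=
    ContinuousOn.div (by fun_prop) (by fun_prop) fun x hx =>
      pow_ne_zero _ ((inv_pos.2 (zero_lt_one.trans ht)).trans_le hx.1).ne'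
  exact intermediate_value_Ioo (inv_lt_one_of_one_lt₀ ht).le hcont
    ⟨coeffOfRoot_inv_lt hq hqp ht, coeffOfRoot_one.symm ▸ coeffOfRoot_lt_one hq hqp ht⟩

end coeffOfRoot

theorem trinomialR_ofReal_mul {p q : ℕ} (c : ℂ) {ω : ℂ} (hω : ω ^ q = 1) {x : ℝ} (hx : x ≠ 0) :
    trinomialR p q c (x * ω) = x ^ p * (c * ω ^ p - coeffOfRoot p q x) := by
  rw [trinomialR, mul_pow, mul_pow, hω, coeffOfRoot]
  push_cast
  rw [mul_sub, mul_div_cancel₀ _ (pow_ne_zero p (Complex.ofReal_ne_zero.2 hx))]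
  ring

theorem root_with_big_power_gives_companion_general (p q : ℕ) (hq : 0 < q) (hpq : q < p)
    (c : ℂ) (ζ : ℂ) (μ : ℝ)
    (hroot : c * ζ ^ p - ((p : ℂ) / q) * ζ ^ q + ((p : ℂ) / q - 1) = 0)
    (hζq : ζ ^ q = (μ : ℂ)) (hμ : 1 < μ) :
    ∃ ξ : ℂ, c * ξ ^ p - ((p : ℂ) / q) * ξ ^ q + ((p : ℂ) / q - 1) = 0 ∧
      ∃ ν : ℝ, ξ ^ q = (ν : ℂ) ∧ 0 < ν ∧ ν < 1 ∧ 1 < μ * ν := by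
  obtain ⟨t, ht0, htq⟩ : ∃ t : ℝ, 0 < t ∧ t ^ q = μ :=
    ⟨μ ^ (q⁻¹ : ℝ), by positivity, Real.rpow_inv_natCast_pow (by linarith) hq.ne'⟩
  have ht1 : 1 < t := (one_lt_pow_iff_of_nonneg ht0.le hq.ne').1 (htq ▸ hμ)
  have htC : (t : ℂ) ≠ 0 := by exact_mod_cast ht0.ne'
  set ω := ζ / t
  have hωq : ω ^ q = 1 := by
    rw [div_pow, hζq, ← htq, Complex.ofReal_pow]
    exact div_self (pow_ne_zero _ htC)
  have hcω : c * ω ^ p = coeffOfRoot p q t := by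
    have hR := trinomialR_ofReal_mul (p := p) c hωq ht0.ne'
    rw [mul_div_cancel₀ ζ htC, trinomialR, hroot, eq_comm, mul_eq_zero] at hR
    exact sub_eq_zero.1 (hR.resolve_left (pow_ne_zero _ htC))
  obtain ⟨x, ⟨hxt, hx1⟩, hx⟩ := exists_coeffOfRoot_eq hq hpq ht1
  have hx0 : 0 < x := (inv_pos.2 ht0).trans hxt
  refine ⟨x * ω, ?_, x ^ q, ?_, pow_pos hx0 q, pow_lt_one₀ hx0.le hx1 hq.ne', ?_⟩
  · rw [← trinomialR, trinomialR_ofReal_mul c hωq hx0.ne', hcω, hx, sub_self, mul_zero]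
  · rw [mul_pow, hωq, mul_one, Complex.ofReal_pow]
  · rw [← htq, ← mul_pow, mul_comm]
    exact one_lt_pow₀ ((inv_lt_iff_one_lt_mul₀ ht0).1 hxt) hq.ne'

/-- If `R(ζ) = c·ζ^p − r·ζ^q + (r−1)` (`r = p/q`, `c ≠ 0`) has a root `ζ` whose
`q`-th power is a real number `μ > 1`, then `R` has another root `ξ` whose `q`-th power is a
real number in `(0,1)` whose product with `μ` exceeds `1`. -/
theorem root_with_big_power_gives_companion (p q : ℕ) (hq : 0 < q) (hpq : q < p)
    (c : ℂ) (hc : c ≠ 0) (ζ : ℂ) (μ : ℝ)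
    (hroot : c * ζ ^ p - ((p : ℂ) / q) * ζ ^ q + ((p : ℂ) / q - 1) = 0)
    (hζq : ζ ^ q = (μ : ℂ)) (hμ : 1 < μ) :
    ∃ ξ : ℂ, c * ξ ^ p - ((p : ℂ) / q) * ξ ^ q + ((p : ℂ) / q - 1) = 0 ∧
      ∃ ν : ℝ, ξ ^ q = (ν : ℂ) ∧ 0 < ν ∧ ν < 1 ∧ 1 < μ * ν :=
  root_with_big_power_gives_companion_general p q hq hpq c ζ μ hroot hζq hμ
end

section
/- Let p, q be positive integers with q < p, r = p/q > 1, and let (cᵢ)_{i=1..N} be nonzero complex numbers with sᵢ ∈ ℕ. Suppose the multiset M in ℂ∖{0} consisting of the q-th powers of the roots of each polynomial Rᵢ(ζ) = cᵢζ^p − rζ^q + (r−1) taken with multiplicity sᵢ, together with n ≥ 0 copies of the number (r−1)/r, is invariant under taking inverses z ↦ 1/z. If p > 2q then one obtains a contradiction; hence necessarily r ≤ 2. -/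
/-!
The coefficients of `c ζ^p - r ζ^q + (r - 1)` vanish in all degrees strictly between `q` and `p`,
so Newton's identities give `∑ ζ^q = 0` over its roots when `p > 2q`, and `∑ ζ^(p-q) = (p-q) r / c`.
Every root satisfies `ζ^(-q) = (r - c ζ^(p-q)) / (r - 1)`, whence `∑ ζ^(-q) = q r / (r - 1)`.
Summing `M` and its image under inversion therefore gives
`n (r-1)/r = (∑ sᵢ) q r/(r-1) + n r/(r-1)`, impossible as `(r-1)/r < r/(r-1)` and `∑ sᵢ > 0`.
-/

open Polynomial

theorem Multiset.sum_map_pow_eq_of_esymm_eq_zero {R : Type*} [CommRing R] (s : Multiset R)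
    {k : ℕ} (hk : 0 < k) (h : ∀ i, 0 < i → i < k → s.esymm i = 0) :
    (s.map (· ^ k)).sum = (-1) ^ (k + 1) * k * s.esymm k := by
  obtain ⟨l, rfl⟩ : ∃ l : List R, (l : Multiset R) = s := Quotient.exists_rep s
  have hl : (Finset.univ.val.map l.get : Multiset R) = l := by
    rw [Fin.univ_val_map, List.ofFn_get]
  have newton := congrArg (MvPolynomial.aeval l.get)
    (MvPolynomial.psum_eq_mul_esymm_sub_sum (Fin l.length) R k hk)
  simp only [MvPolynomial.psum, map_sum, map_sub, map_mul, map_pow, map_neg, map_one,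
    map_natCast, MvPolynomial.aeval_X, MvPolynomial.aeval_esymm_eq_multiset_esymm, hl] at newton
  have hpow : ((l : Multiset R).map (· ^ k)).sum = ∑ x, l.get x ^ k := by
    rw [← hl, Multiset.map_map]
    rfl
  rw [hpow, newton, sub_eq_self]
  refine Finset.sum_eq_zero fun a ha => ?_
  obtain ⟨ha₁, ha₂⟩ := (Finset.mem_filter.1 ha).2
  rw [h a.1 ha₁ ha₂, mul_zero, zero_mul]

theorem Multiset.sum_map_sum_nsmul_add_nsmul_singleton {ι α β : Type*} [AddCommMonoid β]
    (t : Finset ι) (s : ι → ℕ) (F : ι → Multiset α) (n : ℕ) (a : α) (f : α → β) :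
    ((∑ i ∈ t, s i • F i + n • {a}).map f).sum = ∑ i ∈ t, s i • ((F i).map f).sum + n • f a := by
  rw [Multiset.map_add, Multiset.sum_add, ← Multiset.coe_mapAddMonoidHom, map_sum,
    Multiset.sum_sum]
  simp [Multiset.map_nsmul, Multiset.sum_nsmul]

theorem sub_one_div_lt_div_sub_one {r : ℝ} (hr : 1 < r) : (r - 1) / r < r / (r - 1) := by
  rw [div_lt_div_iff₀ (by linarith) (by linarith)]
  nlinarith

theorem Polynomial.sum_roots_pow_eq_of_coeff_eq_zero {K : Type*} [Field K] {P : K[X]}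
    (hP : P.Splits) {k : ℕ} (hk : 0 < k) (hkP : k ≤ P.natDegree)
    (hgap : ∀ i, 0 < i → i < k → P.coeff (P.natDegree - i) = 0) :
    (P.roots.map (· ^ k)).sum = -k * P.coeff (P.natDegree - k) / P.leadingCoeff := by
  have hlc : P.leadingCoeff ≠ 0 :=
    leadingCoeff_ne_zero.2 (ne_zero_of_natDegree_gt (hk.trans_le hkP))
  have vieta : ∀ i ≤ P.natDegree,
      P.coeff (P.natDegree - i) = P.leadingCoeff * (-1) ^ i * P.roots.esymm i := fun i hi => by
    rw [coeff_eq_esymm_roots_of_splits hP (Nat.sub_le _ _), Nat.sub_sub_self hi]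
  have hesymm : ∀ i, 0 < i → i < k → P.roots.esymm i = 0 := fun i hi0 hik => by
    simpa [hlc] using (vieta i (by omega)).symm.trans (hgap i hi0 hik)
  rw [P.roots.sum_map_pow_eq_of_esymm_eq_zero hk hesymm, vieta k hkP]
  field_simp
  ring

section GapTrinomial

variable {K : Type*} [Field K] (c r : K) {p q : ℕ}

noncomputable def gapTrinomial (c r : K) (p q : ℕ) : K[X] := C c * X ^ p - C r * X ^ q + C (r - 1)

theorem coeff_gapTrinomial (k : ℕ) : (gapTrinomial c r p q).coeff k =
    (if k = p then c else 0) - (if k = q then r else 0) + (if k = 0 then r - 1 else 0) := by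
  simp only [gapTrinomial, coeff_add, coeff_sub, coeff_C_mul, coeff_X_pow, coeff_C, mul_ite,
    mul_one, mul_zero]

theorem coeff_gapTrinomial_eq_zero {k : ℕ} (hqk : q < k) (hkp : k < p) :
    (gapTrinomial c r p q).coeff k = 0 := by
  simp [coeff_gapTrinomial, hkp.ne, hqk.ne', (q.zero_le.trans_lt hqk).ne']

variable {c}

theorem natDegree_gapTrinomial (hc : c ≠ 0) (hqp : q < p) :
    (gapTrinomial c r p q).natDegree = p := by
  unfold gapTrinomial
  compute_degree! <;> simp [hc, hqp.le, hqp.ne', (q.zero_le.trans_lt hqp).ne']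

theorem leadingCoeff_gapTrinomial (hc : c ≠ 0) (hqp : q < p) :
    (gapTrinomial c r p q).leadingCoeff = c := by
  rw [leadingCoeff, natDegree_gapTrinomial r hc hqp, coeff_gapTrinomial]
  simp [hqp.ne', (q.zero_le.trans_lt hqp).ne']

theorem eval_zero_gapTrinomial (hq : 0 < q) (hqp : q < p) :
    (gapTrinomial c r p q).eval 0 = r - 1 := by
  simp [gapTrinomial, hq.ne', (hq.trans hqp).ne']

variable [IsAlgClosed K]

theorem sum_roots_pow_gapTrinomial_eq_zero (hc : c ≠ 0) (hq : 0 < q) (h2q : 2 * q < p) :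
    ((gapTrinomial c r p q).roots.map (· ^ q)).sum = 0 := by
  have hqp : q < p := by omega
  rw [sum_roots_pow_eq_of_coeff_eq_zero (IsAlgClosed.splits _) hq
    (by rw [natDegree_gapTrinomial r hc hqp]; omega), natDegree_gapTrinomial r hc hqp,
    coeff_gapTrinomial_eq_zero c r (by omega : q < p - q) (by omega), mul_zero, zero_div]
  intro i hi hiq
  rw [natDegree_gapTrinomial r hc hqp]
  exact coeff_gapTrinomial_eq_zero c r (by omega) (by omega)

theorem sum_roots_pow_sub_gapTrinomial (hc : c ≠ 0) (hq : 0 < q) (hqp : q < p) :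
    ((gapTrinomial c r p q).roots.map (· ^ (p - q))).sum = (p - q : ℕ) * r / c := by
  rw [sum_roots_pow_eq_of_coeff_eq_zero (IsAlgClosed.splits _) (by omega)
    (by rw [natDegree_gapTrinomial r hc hqp]; omega), natDegree_gapTrinomial r hc hqp,
    leadingCoeff_gapTrinomial r hc hqp, coeff_gapTrinomial, Nat.sub_sub_self hqp.le]
  · simp [hqp.ne, hq.ne']
  · intro i hi hiq
    rw [natDegree_gapTrinomial r hc hqp]
    exact coeff_gapTrinomial_eq_zero c r (by omega) (by omega)

theorem sum_roots_inv_pow_gapTrinomial (hc : c ≠ 0) (hq : 0 < q) (hqp : q < p) (hr : r ≠ 1) :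
    ((gapTrinomial c r p q).roots.map (fun ζ => (ζ ^ q)⁻¹)).sum = q * r / (r - 1) := by
  have hr1 : r - 1 ≠ 0 := sub_ne_zero.2 hr
  have hP : gapTrinomial c r p q ≠ 0 :=
    leadingCoeff_ne_zero.1 (by rwa [leadingCoeff_gapTrinomial r hc hqp])
  have inv_pow_root : ∀ ζ ∈ (gapTrinomial c r p q).roots,
      (ζ ^ q)⁻¹ = r / (r - 1) - c / (r - 1) * ζ ^ (p - q) := by
    intro ζ hζ
    have hroot := (mem_roots hP).1 hζ
    have hζ0 : ζ ≠ 0 := by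
      rintro rfl
      rw [IsRoot, eval_zero_gapTrinomial r hq hqp] at hroot
      exact hr1 hroot
    have heval : c * ζ ^ (p - q) * ζ ^ q - r * ζ ^ q + (r - 1) = 0 := by
      rw [mul_assoc, ← pow_add, Nat.sub_add_cancel hqp.le]
      simpa [gapTrinomial] using hroot
    field_simp
    linear_combination heval
  rw [Multiset.map_congr rfl inv_pow_root, Multiset.sum_map_sub, Multiset.sum_map_mul_left,
    Multiset.map_const', Multiset.sum_replicate, IsAlgClosed.card_roots_eq_natDegree,
    natDegree_gapTrinomial r hc hqp, sum_roots_pow_sub_gapTrinomial r hc hq hqp,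
    Nat.cast_sub hqp.le, nsmul_eq_mul]
  field_simp
  ring

end GapTrinomial

/-- Let `q < p`, `r = p/q > 1`, and `c₁,…,c_N` be nonzero complex numbers
(`N ≥ 1`), `sᵢ ≥ 1` natural numbers, `n ≥ 0`. If the multiset `M` consisting of the `q`-th
powers of the roots of each `Rᵢ(ζ) = cᵢζ^p − rζ^q + (r−1)` taken with multiplicity `sᵢ`,
together with `n` copies of `(r−1)/r`, is invariant under `z ↦ 1/z`, then `p ≤ 2q`
(i.e. `r ≤ 2`). -/
theorem multiset_inverse_invariance_forces_r_le_two (p q : ℕ) (hq : 0 < q) (hpq : q < p)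
    (N : ℕ) (hN : 0 < N) (c : Fin N → ℂ) (hc : ∀ i, c i ≠ 0)
    (s : Fin N → ℕ) (hs : ∀ i, 0 < s i) (n : ℕ) (M : Multiset ℂ)
    (hM : M = (∑ i : Fin N,
        s i • (((C (c i) * X ^ p - C ((p : ℂ) / q) * X ^ q + C ((p : ℂ) / q - 1)).roots).map
          (fun ζ => ζ ^ q)))
      + n • ({((p : ℂ) / q - 1) / ((p : ℂ) / q)} : Multiset ℂ))
    (hinv : M.map (fun z => z⁻¹) = M) :
    p ≤ 2 * q := by
  by_contra! h2q
  set ρ : ℝ := p / q with hρ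
  have hρ1 : 1 < ρ := (one_lt_div (by positivity)).2 (by exact_mod_cast hpq)
  have hρ_ne_one : (ρ : ℂ) ≠ 1 := by exact_mod_cast hρ1.ne'
  rw [show (p : ℂ) / q = ρ by simp [hρ]] at hM
  have hsum (f : ℂ → ℂ) : (M.map f).sum = ∑ i, s i •
      (((gapTrinomial (c i) (ρ : ℂ) p q).roots.map (· ^ q)).map f).sum + n • f ((ρ - 1) / ρ) := by
    rw [hM]
    exact Multiset.sum_map_sum_nsmul_add_nsmul_singleton _ _ _ _ _ f
  have hM_sum : M.sum = n * ((ρ - 1) / ρ : ℝ) := by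
    simpa [sum_roots_pow_gapTrinomial_eq_zero _ (hc _) hq h2q] using hsum id
  have hM_inv_sum : (M.map (·⁻¹)).sum =
      (∑ i, s i : ℕ) * (q * ρ / (ρ - 1) : ℝ) + n * (ρ / (ρ - 1) : ℝ) := by
    simp [hsum, sum_roots_inv_pow_gapTrinomial _ (hc _) hq hpq hρ_ne_one, Finset.sum_mul]
  have key : (n : ℝ) * ((ρ - 1) / ρ) =
      (∑ i, s i : ℕ) * (q * ρ / (ρ - 1)) + n * (ρ / (ρ - 1)) := by
    exact_mod_cast hM_sum.symm.trans (hinv ▸ hM_inv_sum)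
  have hT : 0 < ∑ i, s i := Finset.sum_pos (fun i _ => hs i) ⟨⟨0, hN⟩, Finset.mem_univ _⟩
  have hρ0 : 0 < ρ - 1 := by linarith
  have hpos : (0 : ℝ) < (∑ i, s i : ℕ) * (q * ρ / (ρ - 1)) := by positivity
  have hle : (n : ℝ) * ((ρ - 1) / ρ) ≤ n * (ρ / (ρ - 1)) :=
    mul_le_mul_of_nonneg_left (sub_one_div_lt_div_sub_one hρ1).le n.cast_nonneg
  linarith
end

section
/- There is no pair (θ, P) where 0 < θ < 1 is real and P is a finite collection of polynomials of the form R_{p,q,c}(ζ) = c·ζ^p − r·ζ^q + (r−1) (with fixed coprime p > q ≥ 1, r = p/q, and varying c ≠ 0) such that the set M = {θ} ∪ {ζ^q : ζ a root of some polynomial in P} ⊂ ℂ∖{0} is invariant under the map z ↦ 1/z. -/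
/-!
If `ζ` is a root of `R p q c` then `c ζ ^ p = r (ζ ^ q - 1) + 1` with `r = p / q`, so `w = ζ ^ q`
satisfies `c ^ q = coeffPow p q w = (r (w - 1) + 1) ^ q / w ^ p`; conversely, as `p` and `q` are
coprime, every `w ≠ 0` with `coeffPow p q w = c ^ q` is the `q`-th power of a root of `R p q c`.

Let `μ` be the least real element of `M` above `1` (`θ⁻¹` is one), so `c ^ q = coeffPow p q μ`
for some `c`. On the reals, `coeffPow p q μ < 1 = coeffPow p q 1` by Bernoulli's inequality, and
`coeffPow p q μ⁻¹ < coeffPow p q μ` because `logRatio r w - logRatio r w⁻¹` has derivative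
`r (r - 1) (2 r - 1) (w - 1) ^ 2 / (w (r (w - 1) + 1) (r - (r - 1) w)) > 0`. So the intermediate
value theorem gives `φ ∈ (μ⁻¹, 1)` with `coeffPow p q φ = c ^ q`. Then `φ ∈ M`, hence `φ⁻¹ ∈ M`
and `1 < φ⁻¹ < μ`, contradicting the choice of `μ`.
-/

open Real Set

namespace PQTrinomial

noncomputable def logRatio (r w : ℝ) : ℝ := log (r * (w - 1) + 1) - r * log w

variable {r w : ℝ}

lemma hasDerivAt_logRatio (hw : 0 < w) (hL : 0 < r * (w - 1) + 1) :
    HasDerivAt (logRatio r) (r / (r * (w - 1) + 1) - r / w) w := by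
  have hlin : HasDerivAt (fun x => r * (x - 1) + 1) r w := by
    simpa using (((hasDerivAt_id w).sub_const 1).const_mul r).add_const 1
  have := (hlin.log hL.ne').sub ((hasDerivAt_log hw.ne').const_mul r)
  rwa [← div_eq_mul_inv] at this

lemma logRatio_neg (hr : 1 < r) (hw : 1 < w) : logRatio r w < 0 := by
  have hbern := one_add_mul_self_lt_rpow_one_add (s := w - 1) (by linarith) (by linarith) hr
  rw [add_sub_cancel] at hbern
  have hlog : log (r * (w - 1) + 1) < r * log w := by
    rw [← log_rpow (by linarith)]
    exact log_lt_log (by nlinarith) (by linarith)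
  rw [logRatio]
  linarith

lemma logRatio_inv_lt (hr : 1 < r) (hw : 1 < w) (hL : 0 < r * (w⁻¹ - 1) + 1) :
    logRatio r w⁻¹ < logRatio r w := by
  have hNw : 0 < r - (r - 1) * w := by
    have : r * (w⁻¹ - 1) + 1 = (r - (r - 1) * w) / w := by field_simp; ring
    rw [this] at hL
    exact (div_pos_iff_of_pos_right (by linarith)).1 hL
  set Φ : ℝ → ℝ := fun y => logRatio r y - logRatio r y⁻¹
  set Φ' : ℝ → ℝ := fun y =>
    (r / (r * (y - 1) + 1) - r / y) - (r / (r * (y⁻¹ - 1) + 1) - r / y⁻¹) * -(y ^ 2)⁻¹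
  have hderiv : ∀ y ∈ Icc 1 w, HasDerivAt Φ (Φ' y) y := by
    rintro y ⟨hy1, hyw⟩
    have hy : 0 < y := by linarith
    have hLy : 0 < r * (y - 1) + 1 := by nlinarith
    have hLy' : 0 < r * (y⁻¹ - 1) + 1 := by
      have : w⁻¹ ≤ y⁻¹ := inv_anti₀ hy hyw
      nlinarith
    exact (hasDerivAt_logRatio hy hLy).sub
      ((hasDerivAt_logRatio (inv_pos.2 hy) hLy').comp y (hasDerivAt_inv hy.ne'))
  have hmono : StrictMonoOn Φ (Icc 1 w) := by
    refine strictMonoOn_of_hasDerivWithinAt_pos (convex_Icc 1 w)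
      (fun y hy => (hderiv y hy).continuousAt.continuousWithinAt)
      (fun y hy => (hderiv y (interior_subset hy)).hasDerivWithinAt) ?_
    rw [interior_Icc]
    rintro y ⟨hy1, hyw⟩
    have hy : 0 < y := by linarith
    have hL : 0 < r * (y - 1) + 1 := by nlinarith
    obtain ⟨N, hNdef⟩ : ∃ N, N = r - (r - 1) * y := ⟨_, rfl⟩
    have hN : 0 < N := by nlinarith
    have hinv : r * (y⁻¹ - 1) + 1 = N / y := by rw [hNdef]; field_simp; ring
    have : Φ' y = r * (r - 1) * (2 * r - 1) * (y - 1) ^ 2 / (y * (r * (y - 1) + 1) * N) := by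
      simp only [Φ', hinv]
      field_simp
      rw [hNdef]
      ring
    rw [this]
    apply div_pos
    · have : 0 < 2 * r - 1 := by linarith
      exact mul_pos (mul_pos (mul_pos (by linarith) (by linarith)) this) (by nlinarith)
    · exact mul_pos (mul_pos hy hL) hN
  have := hmono ⟨le_rfl, hw.le⟩ ⟨hw.le, le_rfl⟩ hw
  simp only [Φ, inv_one] at this
  linarith

section Field

variable {K : Type*} [Field K] {p q : ℕ} {c ζ w : K}

def R (p q : ℕ) (c ζ : K) : K := c * ζ ^ p - (p / q : K) * ζ ^ q + (p / q - 1)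

def coeffPow (p q : ℕ) (w : K) : K := ((p / q : K) * (w - 1) + 1) ^ q / w ^ p

lemma R_eq_zero_iff : R p q c ζ = 0 ↔ c * ζ ^ p = (p / q : K) * (ζ ^ q - 1) + 1 := by
  rw [R]
  constructor <;> intro h <;> linear_combination h

lemma pow_eq_coeffPow_of_R_eq_zero (hζ : R p q c ζ = 0) (hζ0 : ζ ≠ 0) :
    c ^ q = coeffPow p q (ζ ^ q) := by
  rw [coeffPow, ← R_eq_zero_iff.1 hζ, mul_pow, ← pow_mul, ← pow_mul, mul_comm q p,
    mul_div_cancel_right₀ _ (pow_ne_zero _ hζ0)]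

lemma exists_R_eq_zero_of_pow_eq_coeffPow (hpq : p.Coprime q) (hc : c ≠ 0) (hw : w ≠ 0)
    (h : c ^ q = coeffPow p q w) : ∃ ζ, R p q c ζ = 0 ∧ ζ ^ q = w := by
  set L := (p / q : K) * (w - 1) + 1
  have hA : (L / c) ^ q = w ^ p := by
    rw [coeffPow, eq_div_iff (pow_ne_zero _ hw)] at h
    rw [div_pow, ← h, mul_div_cancel_left₀ _ (pow_ne_zero _ hc)]
  obtain ⟨ζ, hζp, hζq⟩ := (pow_eq_pow_iff_of_coprime hpq.symm).1 hA
  refine ⟨ζ, R_eq_zero_iff.2 ?_, hζq.symm⟩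
  rw [← hζp, ← hζq, mul_div_cancel₀ _ hc]

lemma finite_setOf_R_eq_zero (hc : c ≠ 0) (hqp : q < p) : {ζ : K | R p q c ζ = 0}.Finite := by
  open Polynomial in
  have hpoly : (C c * X ^ p - C (p / q : K) * X ^ q + C (p / q - 1 : K)) ≠ 0 := by
    intro h
    have := congrArg (coeff · p) h
    simp [coeff_X_pow, coeff_C, coeff_one, hqp.ne', (Nat.zero_le q).trans_lt hqp |>.ne'] at this
    exact hc this
  convert Polynomial.finite_setOfPred_isRoot hpoly using 2
  simp [R]

lemma finite_setOf_pow_of_R_eq_zero {cs : Finset K} (hcs : ∀ c ∈ cs, c ≠ 0) (hqp : q < p) :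
    {w : K | ∃ c ∈ cs, ∃ ζ, R p q c ζ = 0 ∧ w = ζ ^ q}.Finite := by
  refine (cs.finite_toSet.biUnion fun c hc =>
    (finite_setOf_R_eq_zero (hcs c hc) hqp).image (· ^ q)).subset ?_
  rintro w ⟨c, hc, ζ, hζ, rfl⟩
  exact mem_biUnion hc (mem_image_of_mem _ hζ)

end Field

lemma coeffPow_eq_exp_logRatio {p q : ℕ} (hq : q ≠ 0) {w : ℝ} (hw : 0 < w)
    (hL : 0 < (p / q : ℝ) * (w - 1) + 1) :
    coeffPow p q w = exp (q * logRatio (p / q) w) := by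
  have hlog : q * logRatio (p / q) w = log (((p / q : ℝ) * (w - 1) + 1) ^ q) - log (w ^ p) := by
    rw [logRatio, log_pow, log_pow]
    field_simp
  rw [coeffPow, hlog, exp_sub, exp_log (pow_pos hL q), exp_log (pow_pos hw p)]

lemma ofReal_coeffPow (p q : ℕ) (x : ℝ) : ((coeffPow p q x : ℝ) : ℂ) = coeffPow p q (x : ℂ) := by
  simp [coeffPow]

lemma exists_mem_Ioo_coeffPow_eq {p q : ℕ} (hq : 0 < q) (hqp : q < p) {μ : ℝ} (hμ : 1 < μ) :
    ∃ φ ∈ Ioo μ⁻¹ 1, coeffPow p q φ = coeffPow p q μ := by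
  have hr : 1 < (p / q : ℝ) := (one_lt_div (by positivity)).2 (by exact_mod_cast hqp)
  have hμ0 : 0 < μ := by linarith
  have hLμ : 0 < (p / q : ℝ) * (μ - 1) + 1 := by nlinarith
  have hκμ : coeffPow p q μ < coeffPow p q 1 := by
    rw [coeffPow_eq_exp_logRatio hq.ne' hμ0 hLμ]
    simpa [coeffPow] using mul_neg_of_pos_of_neg (by positivity) (logRatio_neg hr hμ)
  obtain ⟨a, hμa, ha0, ha1, hκa⟩ :
      ∃ a, μ⁻¹ ≤ a ∧ 0 < a ∧ a < 1 ∧ coeffPow p q a < coeffPow p q μ := by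
    by_cases hLinv : 0 < (p / q : ℝ) * (μ⁻¹ - 1) + 1
    · refine ⟨μ⁻¹, le_rfl, inv_pos.2 hμ0, inv_lt_one_of_one_lt₀ hμ, ?_⟩
      rw [coeffPow_eq_exp_logRatio hq.ne' (inv_pos.2 hμ0) hLinv,
        coeffPow_eq_exp_logRatio hq.ne' hμ0 hLμ, exp_lt_exp]
      exact mul_lt_mul_of_pos_left (logRatio_inv_lt hr hμ hLinv) (by positivity)
    -- otherwise start at the zero `1 - r⁻¹` of `r (w - 1) + 1`, where `coeffPow` vanishes
    · have hr0 : 0 < (p / q : ℝ)⁻¹ := by positivity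
      have hr1 : (p / q : ℝ)⁻¹ < 1 := inv_lt_one_of_one_lt₀ hr
      refine ⟨1 - (p / q : ℝ)⁻¹, ?_, by linarith, by linarith, ?_⟩
      · have := mul_inv_cancel₀ (by positivity : (p / q : ℝ) ≠ 0)
        nlinarith
      · have hL0 : (p / q : ℝ) * (1 - (p / q : ℝ)⁻¹ - 1) + 1 = 0 := by
          rw [sub_sub_cancel_left, mul_neg, mul_inv_cancel₀ (by positivity), neg_add_cancel]
        rw [coeffPow, hL0, zero_pow hq.ne', zero_div]
        exact div_pos (pow_pos hLμ q) (pow_pos hμ0 p)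
  have hcont : ContinuousOn (coeffPow p q) (Icc a 1) := by
    unfold coeffPow
    exact ContinuousOn.div (by fun_prop) (by fun_prop) fun w hw =>
      pow_ne_zero _ (ha0.trans_le hw.1).ne'
  obtain ⟨φ, hφ, hφμ⟩ := intermediate_value_Ioo ha1.le hcont ⟨hκa, hκμ⟩
  exact ⟨φ, ⟨hμa.trans_lt hφ.1, hφ.2⟩, hφμ⟩

end PQTrinomial

open PQTrinomial

/-- There is no pair `(θ, P)` with `θ ∈ (0,1)` real and `P` a finite collection
of polynomials `R_{p,q,c}(ζ) = c·ζ^p − r·ζ^q + (r−1)` (fixed coprime `p > q ≥ 1`, `r = p/q`,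
varying `c ≠ 0`) such that the set `M = {θ} ∪ {ζ^q : ζ root of some polynomial in P}` is
invariant under `z ↦ 1/z`. -/
theorem no_inverse_invariant_set (p q : ℕ) (hq : 0 < q) (hpq : q < p)
    (hcop : Nat.Coprime p q) (θ : ℝ) (hθ0 : 0 < θ) (hθ1 : θ < 1)
    (cs : Finset ℂ) (hcs : ∀ c ∈ cs, c ≠ 0) (M : Set ℂ)
    (hM : M = {((θ : ℂ))} ∪ {w | ∃ c ∈ cs, ∃ ζ : ℂ,
        c * ζ ^ p - ((p : ℂ) / q) * ζ ^ q + ((p : ℂ) / q - 1) = 0 ∧ w = ζ ^ q})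
    (hinv : ∀ z : ℂ, z ∈ M ↔ z⁻¹ ∈ M) :
    False := by
  have hMθ : (θ : ℂ) ∈ M := hM ▸ Or.inl rfl
  have hfin : {x : ℝ | 1 < x ∧ (x : ℂ) ∈ M}.Finite := by
    refine (Finite.preimage Complex.ofReal_injective.injOn ?_).subset fun x hx => hx.2
    exact hM ▸ (finite_singleton _).union (finite_setOf_pow_of_R_eq_zero hcs hpq)
  obtain ⟨μ, ⟨hμ1, hμM⟩, hμmin⟩ := exists_min_image _ id hfin
    ⟨θ⁻¹, (one_lt_inv₀ hθ0).2 hθ1, by exact_mod_cast (hinv _).1 hMθ⟩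
  obtain ⟨c, hc, ζ, hζ, hμζ⟩ : ∃ c ∈ cs, ∃ ζ, R p q c ζ = 0 ∧ (μ : ℂ) = ζ ^ q := by
    rw [hM] at hμM
    refine hμM.resolve_left fun h => ?_
    linarith [Complex.ofReal_injective h]
  obtain ⟨φ, ⟨hμφ, hφ1⟩, hφμ⟩ := exists_mem_Ioo_coeffPow_eq hq hpq hμ1
  have hφ0 : 0 < φ := (inv_pos.2 (by linarith)).trans hμφ
  have hζ0 : ζ ≠ 0 := ne_zero_pow hq.ne' (hμζ ▸ Complex.ofReal_ne_zero.2 (by linarith))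
  obtain ⟨ζ', hζ', hζ'φ⟩ := exists_R_eq_zero_of_pow_eq_coeffPow hcop (hcs c hc)
    (Complex.ofReal_ne_zero.2 hφ0.ne') (by
      rw [pow_eq_coeffPow_of_R_eq_zero hζ hζ0, ← hμζ, ← ofReal_coeffPow, ← hφμ, ofReal_coeffPow])
  have hφM : (φ : ℂ) ∈ M := hM ▸ Or.inr ⟨c, hc, ζ', hζ', hζ'φ.symm⟩
  have := hμmin φ⁻¹ ⟨(one_lt_inv₀ hφ0).2 hφ1, by exact_mod_cast (hinv _).1 hφM⟩
  exact (inv_lt_comm₀ (by linarith) hφ0).1 hμφ |>.not_ge this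
end

section
/- Let (σ_u) be a family of Möbius involutions of the Riemann sphere, parametrized by a small complex parameter u, and suppose there exist families of points α(u), ζ(u), ω(u) ∈ ℂ̄ with: σ_u(ζ(u)) = ζ(u), σ_u(α(u)) = ω(u), ζ(u) → 0, α(u) = o(ζ(u)), and ζ(u) = o(ω(u)) as u → 0. Then for any fixed c ∈ ℂ∖{0} and any family z_u = c·ζ(u)(1+o(1)), one has σ_u(z_u) = c^{−1}·ζ(u)(1+o(1)) as u → 0. -/
/-!
Since `d = -a`, the fixed-point equation gives `b = c ζ² - 2 a ζ`, and together with the equation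
for `α ↦ ω` it gives `a (α - 2ζ + ω) = c (ω α - ζ²)`. The left factor is asymptotic to `ω` and the
right one is `o(ω ζ)`, so `a = o(c ζ)`. Hence `a z + b ~ c ζ²` and `c z + d ~ c c₀ ζ`, whose
quotient is `c₀⁻¹ ζ`. Where `ζ = 0` there is nothing to prove, since then `z = b = 0`.
-/

open Filter Asymptotics

section

variable {ι : Type*} {l : Filter ι}

theorem Asymptotics.IsLittleO.of_inf_principal_ne_zero {E F : Type*} [SeminormedAddGroup E]
    [SeminormedAddGroup F] {f : ι → E} {g : ι → F}
    (h : f =o[l ⊓ 𝓟 {u | g u ≠ 0}] g) (h0 : ∀ᶠ u in l, g u = 0 → f u = 0) : f =o[l] g := by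
  refine isLittleO_iff.mpr fun ε hε => ?_
  filter_upwards [eventually_inf_principal.mp (h.def hε), h0] with u hne hzero
  by_cases hg : g u = 0
  · simp [hzero hg, hg]
  · exact hne hg

variable {𝕜 : Type*} [NormedField 𝕜]

theorem Asymptotics.IsLittleO.of_mul_right {f g h : ι → 𝕜}
    (hfg : (fun u => f u * h u) =o[l] fun u => g u * h u) (hh : ∀ᶠ u in l, h u ≠ 0) :
    f =o[l] g := by
  refine isLittleO_iff.mpr fun ε hε => ?_
  filter_upwards [hfg.def hε, hh] with u hu hne
  rw [norm_mul, norm_mul, ← mul_assoc] at hu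
  exact le_of_mul_le_mul_right hu (norm_pos_iff.mpr hne)

theorem isLittleO_of_involution_fixes_swaps {a b c d α ζ ω : ι → 𝕜}
    (htr : ∀ u, a u + d u = 0)
    (hfix : ∀ u, a u * ζ u + b u = ζ u * (c u * ζ u + d u))
    (hmap : ∀ u, a u * α u + b u = ω u * (c u * α u + d u))
    (hαζ : α =o[l] ζ) (hζω : ζ =o[l] ω) (hω : ∀ᶠ u in l, ω u ≠ 0) :
    a =o[l] fun u => c u * ζ u := by
  have key (u : ι) : a u * (α u - 2 * ζ u + ω u) = c u * (ω u * α u - ζ u ^ 2) := by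
    linear_combination hmap u - hfix u + (ω u - ζ u) * htr u
  have hfactor : (fun u => α u - 2 * ζ u + ω u) ~[l] ω :=
    ((hαζ.trans hζω).sub (hζω.const_mul_left 2)).congr_left fun u => by
      simp only [Pi.sub_apply]; ring
  have hcross : (fun u => ω u * α u - ζ u ^ 2) =o[l] fun u => ω u * ζ u :=
    ((isBigO_refl ω l).mul_isLittleO hαζ).sub
      ((hζω.mul_isBigO (isBigO_refl ζ l)).congr_left fun u => (sq (ζ u)).symm)
  refine IsLittleO.of_mul_right ?_ hω
  calc (fun u => a u * ω u) =O[l] fun u => a u * (α u - 2 * ζ u + ω u) :=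
        (isBigO_refl a l).mul hfactor.isBigO_symm
    _ = fun u => c u * (ω u * α u - ζ u ^ 2) := funext key
    _ =o[l] fun u => c u * (ω u * ζ u) := (isBigO_refl c l).mul_isLittleO hcross
    _ = fun u => c u * ζ u * ω u := funext fun u => by ring

theorem involution_isEquivalent_inv_mul {a b c d ζ z : ι → 𝕜} {c₀ : 𝕜} (hc₀ : c₀ ≠ 0)
    (htr : ∀ u, a u + d u = 0)
    (hfix : ∀ u, a u * ζ u + b u = ζ u * (c u * ζ u + d u))
    (ha : a =o[l] fun u => c u * ζ u) (hc : ∀ᶠ u in l, c u ≠ 0)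
    (hz : (fun u => z u - c₀ * ζ u) =o[l] ζ) :
    (fun u => (a u * z u + b u) / (c u * z u + d u)) ~[l] fun u => c₀⁻¹ * ζ u := by
  have hz2 : (fun u => z u - 2 * ζ u) =O[l] ζ :=
    (hz.isBigO.add ((isBigO_refl ζ l).const_mul_left (c₀ - 2))).congr_left fun u => by ring
  have hnum : (fun u => a u * z u + b u) ~[l] fun u => c u * ζ u ^ 2 :=
    (ha.mul_isBigO hz2).congr
      (fun u => by simp only [Pi.sub_apply]; linear_combination -hfix u - ζ u * htr u)
      fun u => by ring
  have hden : (fun u => c u * z u + d u) ~[l] fun u => c u * (c₀ * ζ u) :=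
    (((isBigO_refl c l).mul_isLittleO hz).sub ha).trans_isBigO
      (((isBigO_refl _ l).const_mul_right hc₀).congr_right fun u => by ring)
      |>.congr_left fun u => by simp only [Pi.sub_apply]; linear_combination -htr u
  refine (hnum.div hden).congr_right ?_
  filter_upwards [hc] with u hcu
  by_cases hζ : ζ u = 0
  · simp [hζ]
  · simp only [Pi.div_apply]
    field_simp

end

theorem degenerating_involutions_invert_factor_general {ι : Type*} (l : Filter ι)
    (a b cc d : ι → ℂ)
    (hdet : ∀ u, a u * d u - b u * cc u ≠ 0)
    (htr : ∀ u, a u + d u = 0)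
    (α ζ ω : ι → ℂ)
    (hfix : ∀ u, a u * ζ u + b u = ζ u * (cc u * ζ u + d u))
    (hmap : ∀ u, a u * α u + b u = ω u * (cc u * α u + d u))
    (hαζ : α =o[l] ζ) (hζω : ζ =o[l] ω)
    (c₀ : ℂ) (hc₀ : c₀ ≠ 0) (z : ι → ℂ)
    (hz : (fun u => z u - c₀ * ζ u) =o[l] ζ) :
    (fun u => (a u * z u + b u) / (cc u * z u + d u) - c₀⁻¹ * ζ u) =o[l] ζ := by
  -- Where `ζ = 0` nothing constrains `a`, so `a = o(cc ζ)` only holds off that set.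
  refine IsLittleO.of_inf_principal_ne_zero ?_ ?_
  · set l' := l ⊓ 𝓟 {u | ζ u ≠ 0}
    have hζω' := hζω.mono (inf_le_left : l' ≤ l)
    have hω : ∀ᶠ u in l', ω u ≠ 0 := by
      filter_upwards [hζω'.isBigO.eq_zero_imp, mem_inf_of_right (mem_principal_self _)]
        with u hζ hζ0 hω using hζ0 (hζ hω)
    have ha := isLittleO_of_involution_fixes_swaps htr hfix hmap (hαζ.mono inf_le_left) hζω' hω
    have hcc : ∀ᶠ u in l', cc u ≠ 0 := by
      filter_upwards [ha.isBigO.eq_zero_imp] with u ha0 hcc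
      exact hdet u (by simp [ha0 (by simp [hcc]), hcc])
    exact (involution_isEquivalent_inv_mul hc₀ htr hfix ha hcc (hz.mono inf_le_left)).isLittleO
      |>.trans_isBigO ((isBigO_refl ζ l').const_mul_left _)
  · filter_upwards [hz.isBigO.eq_zero_imp] with u hzu hζ
    have hz0 : z u = 0 := by simpa [hζ] using hzu hζ
    have hb0 : b u = 0 := by simpa [hζ] using hfix u
    simp [hz0, hb0, hζ]

/-- Let `σ_u(z) = (a(u)z + b(u))/(c(u)z + d(u))` be a family of nontrivial
Möbius involutions (trace `a + d = 0`, determinant `ad − bc ≠ 0`) of the Riemann sphere,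
with fixed points `ζ(u)` and `σ_u(α(u)) = ω(u)`, where `ζ(u) → 0`, `α(u) = o(ζ(u))` and
`ζ(u) = o(ω(u))`. Then for any `c₀ ≠ 0` and any family `z_u = c₀·ζ(u)(1+o(1))`, one has
`σ_u(z_u) = c₀⁻¹·ζ(u)(1+o(1))`. -/
theorem degenerating_involutions_invert_factor {ι : Type*} (l : Filter ι)
    (a b cc d : ι → ℂ)
    (hdet : ∀ u, a u * d u - b u * cc u ≠ 0)
    (htr : ∀ u, a u + d u = 0)
    (α ζ ω : ι → ℂ)
    (hfix : ∀ u, a u * ζ u + b u = ζ u * (cc u * ζ u + d u))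
    (hmap : ∀ u, a u * α u + b u = ω u * (cc u * α u + d u))
    (hζ0 : Tendsto ζ l (nhds 0))
    (hαζ : α =o[l] ζ) (hζω : ζ =o[l] ω)
    (c₀ : ℂ) (hc₀ : c₀ ≠ 0) (z : ι → ℂ)
    (hz : (fun u => z u - c₀ * ζ u) =o[l] ζ) :
    (fun u => (a u * z u + b u) / (cc u * z u + d u) - c₀⁻¹ * ζ u) =o[l] ζ :=
  degenerating_involutions_invert_factor_general l a b cc d hdet htr α ζ ω hfix hmap hαζ hζω c₀ hc₀
    z hz
end

section
/- Let (σ_u) be a family of Möbius involutions of the Riemann sphere with fixed points ζ(u) → 0 and with σ_u(α(u)) = ω(u), where α(u), ω(u) = o(ζ(u)) and α(u) ≠ ω(u). Then the coordinate change z ↦ ζ(u)/z conjugates σ_u to Möbius involutions that converge in PSL(2,ℂ) to the central symmetry w ↦ 2 − w; consequently, for every family z_u = c^{−1}ζ(u)(1+o(1)) with c ≠ 2, one has σ_u(z_u) = (2−c)^{−1}ζ(u)(1+o(1)). -/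
/-!
Trace zero and the fixed point `ζ` force `d = -a` and `b = c ζ² - 2 a ζ`, so in the coordinate
`w = ζ / z` the involution becomes `w ↦ (t - w) / (1 + (t - 2) w)` with `t = c ζ / a`.
Writing `ε = α / ζ` and `δ = ω / ζ`, the relation `σ α = ω` reads `ε + δ - 2 = t (ε δ - 1)`;
as `ε, δ → 0` this forces `t → 2`, and the normal form tends to `w ↦ 2 - w`.
-/

open Filter Asymptotics Topology

def normalizedInvolution {K : Type*} [Field K] (t w : K) : K :=
  (t - w) / (1 + (t - 2) * w)

section Algebra

variable {K : Type*} [Field K] {a b c d ζ α ω : K}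

theorem ne_zero_of_fixed_of_maps (hdet : a * d - b * c ≠ 0) (htr : a + d = 0)
    (hfix : a * ζ + b = ζ * (c * ζ + d)) (hmap : a * α + b = ω * (c * α + d)) (hζ : ζ ≠ 0)
    (hεδ : α / ζ * (ω / ζ) ≠ 1) : a ≠ 0 := by
  rintro rfl
  obtain rfl : d = 0 := by linear_combination htr
  have hc : c ≠ 0 := fun hc => hdet (by rw [hc]; ring)
  refine hεδ ?_
  field_simp
  exact mul_left_cancel₀ hc (by linear_combination hfix - hmap)

theorem mul_div_eq_of_fixed_of_maps (htr : a + d = 0) (hfix : a * ζ + b = ζ * (c * ζ + d))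
    (hmap : a * α + b = ω * (c * α + d)) (ha : a ≠ 0) (hζ : ζ ≠ 0)
    (hεδ : α / ζ * (ω / ζ) - 1 ≠ 0) :
    c * ζ / a = (α / ζ + ω / ζ - 2) / (α / ζ * (ω / ζ) - 1) := by
  rw [eq_div_iff hεδ]
  field_simp
  linear_combination (-1) * (hmap - hfix + (ω - ζ) * htr)

theorem div_apply_div_eq_normalizedInvolution (htr : a + d = 0)
    (hfix : a * ζ + b = ζ * (c * ζ + d)) (ha : a ≠ 0) (hζ : ζ ≠ 0) {w : K} (hw : w ≠ 0) :
    ζ / ((a * (ζ / w) + b) / (c * (ζ / w) + d)) = normalizedInvolution (c * ζ / a) w := by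
  obtain rfl : d = -a := by linear_combination htr
  obtain rfl : b = c * ζ ^ 2 - 2 * a * ζ := by linear_combination hfix + ζ * htr
  unfold normalizedInvolution
  field_simp
  ring

end Algebra

section Limits

variable {ι 𝕜 : Type*} [NormedField 𝕜] {l : Filter ι}

theorem isLittleO_sub_mul_iff_tendsto_div {f g : ι → 𝕜} {L : 𝕜} (hg : ∀ᶠ u in l, g u ≠ 0) :
    (fun u => f u - L * g u) =o[l] g ↔ Tendsto (fun u => f u / g u) l (𝓝 L) := by
  rw [isLittleO_iff_tendsto' (hg.mono fun u hu h0 => absurd h0 hu)]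
  refine (tendsto_congr' ?_).trans tendsto_sub_nhds_zero_iff
  filter_upwards [hg] with u hu
  rw [sub_div, mul_div_cancel_right₀ _ hu]

theorem tendsto_normalizedInvolution {t w : ι → 𝕜} {w₀ : 𝕜} (ht : Tendsto t l (𝓝 2))
    (hw : Tendsto w l (𝓝 w₀)) :
    Tendsto (fun u => normalizedInvolution (t u) (w u)) l (𝓝 (2 - w₀)) := by
  have hden : Tendsto (fun u => 1 + (t u - 2) * w u) l (𝓝 1) := by
    simpa using tendsto_const_nhds.add ((ht.sub_const 2).mul hw)
  rw [← div_one (2 - w₀)]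
  exact (ht.sub hw).div hden one_ne_zero

theorem tendsto_mul_div_of_fixed_of_maps {a b c d ζ α ω : ι → 𝕜}
    (hdet : ∀ u, a u * d u - b u * c u ≠ 0) (htr : ∀ u, a u + d u = 0)
    (hfix : ∀ u, a u * ζ u + b u = ζ u * (c u * ζ u + d u))
    (hmap : ∀ u, a u * α u + b u = ω u * (c u * α u + d u)) (hζ : ∀ᶠ u in l, ζ u ≠ 0)
    (hα : α =o[l] ζ) (hω : ω =o[l] ζ) :
    (∀ᶠ u in l, a u ≠ 0) ∧ Tendsto (fun u => c u * ζ u / a u) l (𝓝 2) := by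
  have hε := hα.tendsto_div_nhds_zero
  have hδ := hω.tendsto_div_nhds_zero
  have hεδ : Tendsto (fun u => α u / ζ u * (ω u / ζ u) - 1) l (𝓝 (-1)) := by
    simpa using (hε.mul hδ).sub_const 1
  have hεδ_ne : ∀ᶠ u in l, α u / ζ u * (ω u / ζ u) - 1 ≠ 0 := hεδ.eventually_ne (by norm_num)
  have ha : ∀ᶠ u in l, a u ≠ 0 := by
    filter_upwards [hζ, hεδ_ne] with u hζu hu
    exact ne_zero_of_fixed_of_maps (hdet u) (htr u) (hfix u) (hmap u) hζu (sub_ne_zero.1 hu)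
  refine ⟨ha, ?_⟩
  have hlim := ((hε.add hδ).sub_const 2).div hεδ (by norm_num)
  rw [show ((0 : 𝕜) + 0 - 2) / -1 = 2 by norm_num] at hlim
  refine hlim.congr' ?_
  filter_upwards [hζ, ha, hεδ_ne] with u hζu hau hu
  exact (mul_div_eq_of_fixed_of_maps (htr u) (hfix u) (hmap u) hau hζu hu).symm

end Limits

theorem degenerating_involutions_central_symmetry_general {ι : Type*} (l : Filter ι)
    (a b cc d : ι → ℂ)
    (hdet : ∀ u, a u * d u - b u * cc u ≠ 0)
    (htr : ∀ u, a u + d u = 0)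
    (α ζ ω : ι → ℂ)
    (hfix : ∀ u, a u * ζ u + b u = ζ u * (cc u * ζ u + d u))
    (hmap : ∀ u, a u * α u + b u = ω u * (cc u * α u + d u))
    (hαζ : α =o[l] ζ) (hωζ : ω =o[l] ζ)
    (hne : ∀ u, α u ≠ ω u) :
    (∀ w : ℂ, w ≠ 0 →
      Tendsto (fun u => ζ u /
          ((a u * (ζ u / w) + b u) / (cc u * (ζ u / w) + d u))) l (nhds (2 - w))) ∧
    (∀ c : ℂ, c ≠ 0 → c ≠ 2 → ∀ z : ι → ℂ,
      (fun u => z u - c⁻¹ * ζ u) =o[l] ζ →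
      (fun u => (a u * z u + b u) / (cc u * z u + d u) - (2 - c)⁻¹ * ζ u) =o[l] ζ) := by
  have hζ : ∀ᶠ u in l, ζ u ≠ 0 := by
    filter_upwards [(hαζ.sub hωζ).isBigO.eq_zero_imp] with u h h0
    exact sub_ne_zero.2 (hne u) (h h0)
  obtain ⟨ha, ht⟩ := tendsto_mul_div_of_fixed_of_maps hdet htr hfix hmap hζ hαζ hωζ
  have hconj : ∀ᶠ u in l, ∀ w ≠ 0,
      ζ u / ((a u * (ζ u / w) + b u) / (cc u * (ζ u / w) + d u)) =
        normalizedInvolution (cc u * ζ u / a u) w := by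
    filter_upwards [hζ, ha] with u hζu hau w hw
    exact div_apply_div_eq_normalizedInvolution (htr u) (hfix u) hau hζu hw
  refine ⟨fun w hw => ?_, fun c hc0 hc2 z hz => ?_⟩
  · exact (tendsto_normalizedInvolution ht tendsto_const_nhds).congr'
      (hconj.mono fun u hu => (hu w hw).symm)
  · have hw : Tendsto (fun u => ζ u / z u) l (𝓝 c) := by
      simpa using ((isLittleO_sub_mul_iff_tendsto_div hζ).1 hz).inv₀ (inv_ne_zero hc0)
    rw [isLittleO_sub_mul_iff_tendsto_div hζ]
    refine ((tendsto_normalizedInvolution ht hw).inv₀ (sub_ne_zero.2 hc2.symm)).congr' ?_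
    filter_upwards [hζ, hconj, hw.eventually_ne hc0] with u hζu hu hwu
    rw [← hu _ hwu, div_div_cancel₀ hζu, inv_div]

/-- Let `σ_u(z) = (a(u)z + b(u))/(c(u)z + d(u))` be a family of nontrivial
Möbius involutions (trace zero, nonzero determinant) with fixed points `ζ(u) → 0` and
`σ_u(α(u)) = ω(u)`, where `α(u), ω(u) = o(ζ(u))` and `α(u) ≠ ω(u)`. Then in the coordinate
`w = ζ(u)/z` the involutions converge pointwise to the central symmetry `w ↦ 2 − w`;
consequently, for every `c ≠ 0`, `c ≠ 2`, and every family `z_u = c⁻¹ζ(u)(1+o(1))`,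
one has `σ_u(z_u) = (2−c)⁻¹ζ(u)(1+o(1))`. -/
theorem degenerating_involutions_central_symmetry {ι : Type*} (l : Filter ι)
    (a b cc d : ι → ℂ)
    (hdet : ∀ u, a u * d u - b u * cc u ≠ 0)
    (htr : ∀ u, a u + d u = 0)
    (α ζ ω : ι → ℂ)
    (hfix : ∀ u, a u * ζ u + b u = ζ u * (cc u * ζ u + d u))
    (hmap : ∀ u, a u * α u + b u = ω u * (cc u * α u + d u))
    (hζ0 : Tendsto ζ l (nhds 0))
    (hαζ : α =o[l] ζ) (hωζ : ω =o[l] ζ)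
    (hne : ∀ u, α u ≠ ω u) :
    (∀ w : ℂ, w ≠ 0 →
      Tendsto (fun u => ζ u /
          ((a u * (ζ u / w) + b u) / (cc u * (ζ u / w) + d u))) l (nhds (2 - w))) ∧
    (∀ c : ℂ, c ≠ 0 → c ≠ 2 → ∀ z : ι → ℂ,
      (fun u => z u - c⁻¹ * ζ u) =o[l] ζ →
      (fun u => (a u * z u + b u) / (cc u * z u + d u) - (2 - c)⁻¹ * ζ u) =o[l] ζ) :=
  degenerating_involutions_central_symmetry_general l a b cc d hdet htr α ζ ω hfix hmap hαζ hωζ hne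
end
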